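/- arXiv:1701.06640 — 2 statements merged into one kernel-verified Lean document; each statement's English description precedes it below -/
import Mathlib

section
/- For positive integers k1 < k2, the supremum of the set D_odd = { −1/2^{b1} + 1/2^{b1+b2} − 1/2^{b1+b2+b3} + ... : b_i ∈ {k1, k2} } equals (1 − 2^{k1})/(2^{k1+k2} − 1), and its infimum equals (1 − 2^{k2})/(2^{k1+k2} − 1); hence its diameter is (2^{k2} − 2^{k1})/(2^{k1+k2} − 1). -/
open Filter Topology

/-- Partial sum `a 0 + ... + a n` of a digit sequence. -/
noncomputable def psum (a : ℕ → ℕ) (n : ℕ) : ℕ := ∑ i ∈ Finset.range (n + 1), a i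

/-- Value of the alternating series `Σ_{n≥1} 2(-1)^{n-1}/2^{a1+...+an}`. -/
noncomputable def val (a : ℕ → ℕ) : ℝ := ∑' n : ℕ, (2 * (-1 : ℝ) ^ n) / 2 ^ (psum a n)

/-- The set `Δ0` of all values of the alternating series over `K`-valued digit sequences. -/
noncomputable def Delta0 (K : Set ℕ) : Set ℝ :=
  { y | ∃ a : ℕ → ℕ, (∀ i, a i ∈ K) ∧ y = val a }

/-- Value of the series over m ≥ 1 of (-1)^m / 2^(b1+...+bm). -/
noncomputable def valOdd (b : ℕ → ℕ) : ℝ := ∑' m : ℕ, (-1 : ℝ) ^ (m + 1) / 2 ^ (psum b m)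

noncomputable def Dodd (K : Set ℕ) : Set ℝ :=
  { y | ∃ b : ℕ → ℕ, (∀ i, b i ∈ K) ∧ y = valOdd b }

/-!
Splitting off the first digit gives `valOdd b = -(1 + valOdd (tail b)) / 2 ^ (b 0)`, so every
point of `Dodd {k₁, k₂}` has the form `-(1 + w) / 2 ^ k` with `w` again in the set and
`w ≥ -1`. Hence `sup ≤ -(1 + inf) / 2 ^ k₂` and `inf ≥ -(1 + sup) / 2 ^ k₁`, and solving
these two inequalities bounds `sup` and `inf` by the values of the two alternating digit
sequences `k₂, k₁, k₂, …` and `k₁, k₂, k₁, …`, which lie in the set.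
-/

lemma succ_le_psum {b : ℕ → ℕ} (hb : ∀ i, 1 ≤ b i) (m : ℕ) : m + 1 ≤ psum b m := by
  calc m + 1 = ∑ _i ∈ Finset.range (m + 1), 1 := by simp
    _ ≤ psum b m := Finset.sum_le_sum fun i _ => hb i

lemma psum_succ (b : ℕ → ℕ) (m : ℕ) : psum b (m + 1) = psum (fun n => b (n + 1)) m + b 0 :=
  Finset.sum_range_succ' b (m + 1)

lemma norm_valOdd_term_le {b : ℕ → ℕ} (hb : ∀ i, 1 ≤ b i) (m : ℕ) :
    ‖(-1 : ℝ) ^ (m + 1) / 2 ^ psum b m‖ ≤ 1 / 2 / 2 ^ m := by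
  rw [norm_div, norm_pow, norm_pow, norm_neg, norm_one, one_pow, Real.norm_ofNat,
    div_div, ← pow_succ']
  exact one_div_le_one_div_of_le (by positivity)
    (pow_le_pow_right₀ one_le_two (succ_le_psum hb m))

lemma summable_valOdd {b : ℕ → ℕ} (hb : ∀ i, 1 ≤ b i) :
    Summable fun m : ℕ => (-1 : ℝ) ^ (m + 1) / 2 ^ psum b m :=
  .of_norm_bounded (hasSum_geometric_two' 1).summable (norm_valOdd_term_le hb)

lemma abs_valOdd_le_one {b : ℕ → ℕ} (hb : ∀ i, 1 ≤ b i) : |valOdd b| ≤ 1 :=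
  tsum_of_norm_bounded (hasSum_geometric_two' 1) (norm_valOdd_term_le hb)

lemma valOdd_eq_tail {b : ℕ → ℕ} (hb : ∀ i, 1 ≤ b i) :
    valOdd b = -(1 + valOdd fun n => b (n + 1)) / 2 ^ b 0 := by
  have hterm : ∀ m : ℕ, (-1 : ℝ) ^ (m + 1 + 1) / 2 ^ psum b (m + 1) =
      -1 / 2 ^ b 0 * ((-1 : ℝ) ^ (m + 1) / 2 ^ psum (fun n => b (n + 1)) m) := by
    intro m
    rw [psum_succ, pow_add (2 : ℝ)]
    ring
  rw [valOdd, (summable_valOdd hb).tsum_eq_zero_add, tsum_congr hterm, tsum_mul_left, valOdd]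
  simp only [psum, zero_add, Finset.range_one, Finset.sum_singleton]
  ring

def alternating (a c : ℕ) (n : ℕ) : ℕ := if Even n then a else c

lemma alternating_succ (a c n : ℕ) : alternating a c (n + 1) = alternating c a n := by
  by_cases hn : Even n <;> simp [alternating, Nat.even_add_one, hn]

lemma alternating_mem {K : Set ℕ} {a c : ℕ} (ha : a ∈ K) (hc : c ∈ K) (n : ℕ) :
    alternating a c n ∈ K := by
  unfold alternating; split_ifs <;> assumption

lemma valOdd_alternating_mul {a c : ℕ} (ha : 1 ≤ a) (hc : 1 ≤ c) :
    valOdd (alternating a c) * 2 ^ a = -(1 + valOdd (alternating c a)) := by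
  have hfirst : alternating a c 0 = a := by simp [alternating]
  rw [valOdd_eq_tail (alternating_mem (K := Set.Ici 1) ha hc), hfirst,
    div_mul_cancel₀ _ (by positivity)]
  simp only [alternating_succ]

lemma valOdd_alternating {a c : ℕ} (ha : 1 ≤ a) (hc : 1 ≤ c) :
    valOdd (alternating a c) = (1 - 2 ^ c) / (2 ^ (c + a) - 1) := by
  have hac := valOdd_alternating_mul ha hc
  have hca := valOdd_alternating_mul hc ha
  have hden : (2 : ℝ) ^ (c + a) - 1 ≠ 0 :=
    sub_ne_zero.mpr (one_lt_pow₀ one_lt_two (by omega)).ne'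
  rw [eq_div_iff hden, pow_add]
  linear_combination (2 : ℝ) ^ c * hac - hca

lemma Dodd_nonempty {K : Set ℕ} (hne : K.Nonempty) : (Dodd K).Nonempty := by
  obtain ⟨k, hk⟩ := hne
  exact ⟨_, fun _ => k, fun _ => hk, rfl⟩

section Dodd

variable {K : Set ℕ} (hK : ∀ k ∈ K, 1 ≤ k)
include hK

lemma Dodd_subset_Icc : Dodd K ⊆ Set.Icc (-1) 1 := by
  rintro y ⟨b, hb, rfl⟩
  exact abs_le.mp (abs_valOdd_le_one fun i => hK _ (hb i))

lemma exists_eq_of_mem_Dodd {y : ℝ} (hy : y ∈ Dodd K) :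
    ∃ k ∈ K, ∃ w ∈ Dodd K, y = -(1 + w) / 2 ^ k := by
  obtain ⟨b, hb, rfl⟩ := hy
  exact ⟨b 0, hb 0, _, ⟨_, fun i => hb (i + 1), rfl⟩, valOdd_eq_tail fun i => hK _ (hb i)⟩

lemma sSup_Dodd_le (hne : K.Nonempty) {n : ℕ} (hn : ∀ k ∈ K, k ≤ n) :
    sSup (Dodd K) ≤ -(1 + sInf (Dodd K)) / 2 ^ n := by
  refine csSup_le (Dodd_nonempty hne) fun y hy => ?_
  obtain ⟨k, hk, w, hw, rfl⟩ := exists_eq_of_mem_Dodd hK hy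
  have hinf_le : sInf (Dodd K) ≤ w :=
    csInf_le (bddBelow_Icc.mono (Dodd_subset_Icc hK)) hw
  have hinf_ge : -1 ≤ sInf (Dodd K) :=
    le_csInf (Dodd_nonempty hne) fun x hx => (Dodd_subset_Icc hK hx).1
  rw [neg_div, neg_div, neg_le_neg_iff]
  calc (1 + sInf (Dodd K)) / 2 ^ n ≤ (1 + sInf (Dodd K)) / 2 ^ k :=
        div_le_div_of_nonneg_left (by linarith) (by positivity)
          (pow_le_pow_right₀ one_le_two (hn k hk))
    _ ≤ (1 + w) / 2 ^ k := by gcongr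

lemma le_sInf_Dodd (hne : K.Nonempty) {n : ℕ} (hn : ∀ k ∈ K, n ≤ k) :
    -(1 + sSup (Dodd K)) / 2 ^ n ≤ sInf (Dodd K) := by
  refine le_csInf (Dodd_nonempty hne) fun y hy => ?_
  obtain ⟨k, hk, w, hw, rfl⟩ := exists_eq_of_mem_Dodd hK hy
  have hw_le : w ≤ sSup (Dodd K) := le_csSup (bddAbove_Icc.mono (Dodd_subset_Icc hK)) hw
  have hw_ge : -1 ≤ w := (Dodd_subset_Icc hK hw).1
  rw [neg_div, neg_div, neg_le_neg_iff]
  calc (1 + w) / 2 ^ k ≤ (1 + w) / 2 ^ n :=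
        div_le_div_of_nonneg_left (by linarith) (by positivity)
          (pow_le_pow_right₀ one_le_two (hn k hk))
    _ ≤ (1 + sSup (Dodd K)) / 2 ^ n := by gcongr

end Dodd

lemma le_div_and_div_le_of_le_neg_one_add_div {A B s i : ℝ} (hA : 0 < A) (hB : 0 < B)
    (hAB : 1 < A * B) (hs : s ≤ -(1 + i) / B) (hi : -(1 + s) / A ≤ i) :
    s ≤ (1 - A) / (A * B - 1) ∧ (1 - B) / (A * B - 1) ≤ i := by
  rw [le_div_iff₀ hB] at hs
  rw [div_le_iff₀ hA] at hi
  constructor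
  · rw [le_div_iff₀ (by linarith)]
    nlinarith [mul_le_mul_of_nonneg_left hs hA.le]
  · rw [div_le_iff₀ (by linarith)]
    nlinarith [mul_le_mul_of_nonneg_left hi hB.le]

theorem sup_inf_diam_Dodd (k1 k2 : ℕ) (hk1 : 0 < k1) (hk : k1 < k2) :
    sSup (Dodd {k1, k2}) = (1 - (2 : ℝ) ^ k1) / ((2 : ℝ) ^ (k1 + k2) - 1) ∧
    sInf (Dodd {k1, k2}) = (1 - (2 : ℝ) ^ k2) / ((2 : ℝ) ^ (k1 + k2) - 1) ∧
    Metric.diam (Dodd {k1, k2}) =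
      ((2 : ℝ) ^ k2 - (2 : ℝ) ^ k1) / ((2 : ℝ) ^ (k1 + k2) - 1) := by
  have hge : ∀ k ∈ ({k1, k2} : Set ℕ), k1 ≤ k := by rintro k (rfl | rfl) <;> omega
  have hle : ∀ k ∈ ({k1, k2} : Set ℕ), k ≤ k2 := by rintro k (rfl | rfl) <;> omega
  have hK : ∀ k ∈ ({k1, k2} : Set ℕ), 1 ≤ k := fun k hk => hk1.trans_le (hge k hk)
  have hsub := Dodd_subset_Icc hK
  have hk1K : k1 ∈ ({k1, k2} : Set ℕ) := Set.mem_insert _ _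
  have hk2K : k2 ∈ ({k1, k2} : Set ℕ) := Set.mem_insert_of_mem _ rfl
  have hmem : ∀ {a c}, a ∈ ({k1, k2} : Set ℕ) → c ∈ ({k1, k2} : Set ℕ) →
      valOdd (alternating a c) ∈ Dodd {k1, k2} := fun ha hc => ⟨_, alternating_mem ha hc, rfl⟩
  have hsup_ge := le_csSup (bddAbove_Icc.mono hsub) (hmem hk2K hk1K)
  have hinf_le := csInf_le (bddBelow_Icc.mono hsub) (hmem hk1K hk2K)
  rw [valOdd_alternating (by omega) hk1] at hsup_ge
  rw [valOdd_alternating hk1 (by omega), add_comm] at hinf_le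
  obtain ⟨hsup_le, hinf_ge⟩ := le_div_and_div_le_of_le_neg_one_add_div
    (by positivity) (by positivity)
    (one_lt_mul_of_lt_of_le (one_lt_pow₀ one_lt_two hk1.ne') (one_le_pow₀ one_le_two))
    (sSup_Dodd_le hK ⟨k1, hk1K⟩ hle) (le_sInf_Dodd hK ⟨k1, hk1K⟩ hge)
  rw [← pow_add] at hsup_le hinf_ge
  have hsup := le_antisymm hsup_le hsup_ge
  have hinf := le_antisymm hinf_le hinf_ge
  refine ⟨hsup, hinf, ?_⟩
  rw [Real.diam_eq ((Metric.isBounded_Icc (-1 : ℝ) 1).subset hsub), hsup, hinf]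
  ring
end

section
/- The Minkowski function G, restricted to the set E9 of continued fractions with partial quotients in {1,...,9}, maps E9 bijectively onto the self-similar set Δ0 that is the attractor of the IFS {y ↦ 2/2^k − y/2^k : k = 1,...,9}, i.e., G(E9) = Δ0. -/
/-!
With `f k y = 2 / 2 ^ k - y / 2 ^ k`, the Minkowski series satisfies
`Gval a = f (a 0) (Gval (a ∘ succ))`, and each `f k` with `k ≥ 1` halves distances. Hence
`f (a 0) ∘ ⋯ ∘ f (a (n - 1))` maps the bounded invariant set `Δ` into itself and into a
`2⁻ⁿ`-neighbourhood of `Gval a`, so `Gval a ∈ Δ` by closedness; conversely, unfolding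
`Δ ⊆ ⋃ k, f k '' Δ` from a point `y ∈ Δ` produces digits `a` with `Gval a = y`. Since `Gval a` lies
strictly between `1 / 2 ^ a 0` and `2 / 2 ^ a 0`, it determines the first digit and then, by
induction, all of them. On the continued fraction side, a limit `x` of the convergents determines
its first partial quotient as `⌈x⁻¹⌉ - 1`, so expansions are unique, and for bounded partial
quotients the maps `y ↦ 1 / (k + y)` contract, so the convergents do converge.
-/

open Filter Topology

/-- Value of the finite continued fraction [0; a 0, a 1, ..., a (n-1)]. -/
noncomputable def finCF : ℕ → (ℕ → ℕ) → ℝ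
  | 0, _ => 0
  | n + 1, a => 1 / (a 0 + finCF n (fun i => a (i + 1)))

/-- The set of reals whose continued fraction expansion has all partial quotients in {1,...,9}. -/
noncomputable def E9 : Set ℝ :=
  { x | ∃ a : ℕ → ℕ, (∀ i, a i ∈ Finset.Icc 1 9) ∧
      Tendsto (fun n => finCF n a) atTop (𝓝 x) }

/-- The value of the Minkowski series for a digit sequence. -/
noncomputable def Gval (a : ℕ → ℕ) : ℝ :=
  ∑' n : ℕ, (-1 : ℝ) ^ n * (2 : ℝ) ^ ((1 : ℤ) - (psum a n : ℤ))

open Classical in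
/-- The Minkowski question-mark function, defined via a choice of continued fraction
expansion (and 0 off the set of such reals). -/
noncomputable def G (x : ℝ) : ℝ :=
  if h : ∃ a : ℕ → ℕ, (∀ i, a i ∈ Finset.Icc 1 9) ∧
      Tendsto (fun n => finCF n a) atTop (𝓝 x) then Gval h.choose else 0


def shift (a : ℕ → ℕ) (i : ℕ) : ℕ := a (i + 1)

lemma iterate_shift_apply (a : ℕ → ℕ) (n i : ℕ) : shift^[n] a i = a (i + n) := by
  induction n generalizing a with
  | zero => rfl
  | succ n ih => rw [Function.iterate_succ_apply, ih]; rfl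

lemma psum_zero (a : ℕ → ℕ) : psum a 0 = a 0 := by simp [psum]

lemma psum_succ_s19 (a : ℕ → ℕ) (n : ℕ) : psum a (n + 1) = a 0 + psum (shift a) n := by
  rw [psum, Finset.sum_range_succ', add_comm]; rfl

lemma le_psum {a : ℕ → ℕ} (ha : ∀ i, 1 ≤ a i) (n : ℕ) : n + 1 ≤ psum a n := by
  simpa [psum] using Finset.card_nsmul_le_sum (Finset.range (n + 1)) a 1 fun i _ => ha i

noncomputable def ifsMap (k : ℕ) (y : ℝ) : ℝ := 2 / 2 ^ k - y / 2 ^ k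

lemma ifsMap_sub_ifsMap (k : ℕ) (y z : ℝ) : ifsMap k y - ifsMap k z = (z - y) / 2 ^ k := by
  unfold ifsMap; ring

lemma ifsMap_injective (k : ℕ) : Function.Injective (ifsMap k) := fun y z h => by
  have := ifsMap_sub_ifsMap k y z
  rw [h, sub_self, eq_comm, div_eq_zero_iff, sub_eq_zero] at this
  exact this.resolve_right (by positivity) |>.symm

lemma two_le_two_pow {k : ℕ} (hk : 1 ≤ k) : (2 : ℝ) ≤ 2 ^ k := by
  simpa using pow_le_pow_right₀ one_le_two hk

lemma abs_ifsMap_sub_le {k : ℕ} (hk : 1 ≤ k) (y z : ℝ) :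
    |ifsMap k y - ifsMap k z| ≤ |y - z| / 2 := by
  rw [ifsMap_sub_ifsMap, abs_div, abs_of_pos (pow_pos two_pos k : (0 : ℝ) < 2 ^ k), abs_sub_comm]
  exact div_le_div_of_nonneg_left (abs_nonneg _) two_pos (two_le_two_pow hk)

lemma norm_Gval_term_le {a : ℕ → ℕ} (ha : ∀ i, 1 ≤ a i) (n : ℕ) :
    ‖(-1 : ℝ) ^ n * (2 : ℝ) ^ ((1 : ℤ) - (psum a n : ℤ))‖ ≤ (1 / 2 : ℝ) ^ n := by
  have hp : (1 : ℤ) - psum a n ≤ -n := by have := le_psum ha n; omega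
  rw [norm_mul, norm_pow, norm_neg, norm_one, one_pow, one_mul,
    Real.norm_of_nonneg (by positivity)]
  calc (2 : ℝ) ^ ((1 : ℤ) - psum a n) ≤ 2 ^ (-(n : ℤ)) := zpow_le_zpow_right₀ one_le_two hp
    _ = (1 / 2) ^ n := by simp [zpow_neg]

lemma abs_Gval_le {a : ℕ → ℕ} (ha : ∀ i, 1 ≤ a i) : |Gval a| ≤ 2 :=
  tsum_of_norm_bounded hasSum_geometric_two (norm_Gval_term_le ha)

lemma Gval_eq_ifsMap {a : ℕ → ℕ} (ha : ∀ i, 1 ≤ a i) : Gval a = ifsMap (a 0) (Gval (shift a)) := by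
  have hterm : ∀ n : ℕ, (-1 : ℝ) ^ (n + 1) * (2 : ℝ) ^ ((1 : ℤ) - (psum a (n + 1) : ℤ)) =
      -((-1 : ℝ) ^ n * (2 : ℝ) ^ ((1 : ℤ) - (psum (shift a) n : ℤ)) / 2 ^ a 0) := by
    intro n
    rw [psum_succ_s19, Nat.cast_add, show (1 : ℤ) - (a 0 + psum (shift a) n) =
      (1 - psum (shift a) n) - a 0 by ring, zpow_sub₀ two_ne_zero, zpow_natCast, pow_succ]
    ring
  have hsum := Summable.of_norm_bounded summable_geometric_two (norm_Gval_term_le ha)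
  rw [Gval, hsum.tsum_eq_zero_add, tsum_congr hterm, tsum_neg, tsum_div_const, psum_zero, ifsMap,
    Gval, zpow_sub₀ two_ne_zero, zpow_natCast]
  ring

lemma Gval_mem_Ioo {a : ℕ → ℕ} (ha : ∀ i, 1 ≤ a i) :
    Gval a ∈ Set.Ioo (1 / 2 ^ a 0) (2 / 2 ^ a 0) := by
  have hrec : ∀ b : ℕ → ℕ, (∀ i, 1 ≤ b i) → Gval b = (2 - Gval (shift b)) / 2 ^ b 0 :=
    fun b hb => by rw [Gval_eq_ifsMap hb, ifsMap, sub_div]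
  have htail : ∀ b : ℕ → ℕ, (∀ i, 1 ≤ b i) → ∀ i, 1 ≤ shift b i := fun b hb i => hb (i + 1)
  have hnonneg : ∀ b : ℕ → ℕ, (∀ i, 1 ≤ b i) → 0 ≤ Gval b := fun b hb => by
    rw [hrec b hb]
    have := (abs_le.1 (abs_Gval_le (htail b hb))).2
    exact div_nonneg (by linarith) (by positivity)
  have hle : ∀ b : ℕ → ℕ, (∀ i, 1 ≤ b i) → Gval b ≤ 1 := fun b hb => by
    rw [hrec b hb]
    have := hnonneg _ (htail b hb)
    exact div_le_one_of_le₀ (by linarith [two_le_two_pow (hb 0)]) (by positivity)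
  have hpos : ∀ b : ℕ → ℕ, (∀ i, 1 ≤ b i) → 0 < Gval b := fun b hb => by
    rw [hrec b hb]
    have := hle _ (htail b hb)
    exact div_pos (by linarith) (by positivity)
  have hlt : ∀ b : ℕ → ℕ, (∀ i, 1 ≤ b i) → Gval b < 1 := fun b hb => by
    rw [hrec b hb, div_lt_one (by positivity)]
    linarith [hpos _ (htail b hb), two_le_two_pow (hb 0)]
  rw [hrec a ha]
  have h₀ := hpos _ (htail a ha)
  have h₁ := hlt _ (htail a ha)
  constructor <;> gcongr <;> linarith

lemma Gval_lt_Gval_of_head_lt {a b : ℕ → ℕ} (ha : ∀ i, 1 ≤ a i) (hb : ∀ i, 1 ≤ b i)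
    (h : a 0 < b 0) : Gval b < Gval a :=
  calc Gval b < 2 / 2 ^ b 0 := (Gval_mem_Ioo hb).2
    _ ≤ 1 / 2 ^ a 0 := by
      rw [div_le_div_iff₀ (by positivity) (by positivity), ← pow_succ', one_mul]
      exact pow_le_pow_right₀ one_le_two h
    _ < Gval a := (Gval_mem_Ioo ha).1

lemma head_eq_and_Gval_shift_eq_of_Gval_eq {a b : ℕ → ℕ} (ha : ∀ i, 1 ≤ a i)
    (hb : ∀ i, 1 ≤ b i) (h : Gval a = Gval b) : a 0 = b 0 ∧ Gval (shift a) = Gval (shift b) := by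
  have h₀ : a 0 = b 0 := by
    by_contra hne
    rcases Nat.lt_or_gt_of_ne hne with hlt | hlt
    · exact (Gval_lt_Gval_of_head_lt ha hb hlt).ne' h
    · exact (Gval_lt_Gval_of_head_lt hb ha hlt).ne h
  rw [Gval_eq_ifsMap ha, Gval_eq_ifsMap hb, h₀] at h
  exact ⟨h₀, ifsMap_injective _ h⟩

theorem Gval_injOn : Set.InjOn Gval {a | ∀ i, 1 ≤ a i} := by
  intro a ha b hb h
  funext n
  induction n generalizing a b with
  | zero => exact (head_eq_and_Gval_shift_eq_of_Gval_eq ha hb h).1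
  | succ n ih =>
    exact ih (fun i => ha (i + 1)) (fun i => hb (i + 1))
      (head_eq_and_Gval_shift_eq_of_Gval_eq ha hb h).2

/-- `ifsComp a n = ifsMap (a 0) ∘ ⋯ ∘ ifsMap (a (n - 1))`. -/
noncomputable def ifsComp (a : ℕ → ℕ) : ℕ → ℝ → ℝ
  | 0, y => y
  | n + 1, y => ifsComp a n (ifsMap (a n) y)

lemma ifsComp_mem {K : Set ℕ} {Δ : Set ℝ} (hK : ∀ k ∈ K, Set.MapsTo (ifsMap k) Δ Δ)
    {a : ℕ → ℕ} (ha : ∀ i, a i ∈ K) (n : ℕ) {y : ℝ} (hy : y ∈ Δ) : ifsComp a n y ∈ Δ := by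
  induction n generalizing y with
  | zero => exact hy
  | succ n ih => exact ih (hK _ (ha n) hy)

lemma abs_ifsComp_sub_le {a : ℕ → ℕ} (ha : ∀ i, 1 ≤ a i) (n : ℕ) (y z : ℝ) :
    |ifsComp a n y - ifsComp a n z| ≤ |y - z| / 2 ^ n := by
  induction n generalizing y z with
  | zero => simp [ifsComp]
  | succ n ih =>
    calc |ifsComp a (n + 1) y - ifsComp a (n + 1) z|
        ≤ |ifsMap (a n) y - ifsMap (a n) z| / 2 ^ n := ih _ _
      _ ≤ |y - z| / 2 / 2 ^ n := by gcongr; exact abs_ifsMap_sub_le (ha n) y z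
      _ = |y - z| / 2 ^ (n + 1) := by rw [pow_succ', div_div]

lemma ifsComp_eq_of_chain {a : ℕ → ℕ} {z : ℕ → ℝ} (hz : ∀ n, z n = ifsMap (a n) (z (n + 1)))
    (n : ℕ) : ifsComp a n (z n) = z 0 := by
  induction n with
  | zero => rfl
  | succ n ih => rw [ifsComp, ← hz, ih]

lemma Gval_eq_ifsComp {a : ℕ → ℕ} (ha : ∀ i, 1 ≤ a i) (n : ℕ) :
    Gval a = ifsComp a n (Gval (shift^[n] a)) := by
  refine (ifsComp_eq_of_chain (z := fun m => Gval (shift^[m] a)) (fun m => ?_) n).symm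
  rw [Gval_eq_ifsMap (fun i => iterate_shift_apply a m i ▸ ha _), iterate_shift_apply,
    Function.iterate_succ_apply', zero_add]

lemma tendsto_ifsComp_Gval {a : ℕ → ℕ} (ha : ∀ i, 1 ≤ a i) {z : ℕ → ℝ} {M : ℝ}
    (hz : ∀ n, |z n| ≤ M) : Tendsto (fun n => ifsComp a n (z n)) atTop (𝓝 (Gval a)) := by
  have hbound : ∀ n, |ifsComp a n (z n) - Gval a| ≤ (M + 2) * (1 / 2) ^ n := fun n => by
    have hG := abs_Gval_le (a := shift^[n] a) fun i => iterate_shift_apply a n i ▸ ha _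
    calc |ifsComp a n (z n) - Gval a| ≤ |z n - Gval (shift^[n] a)| / 2 ^ n := by
          rw [Gval_eq_ifsComp ha n]; exact abs_ifsComp_sub_le ha n _ _
      _ ≤ (M + 2) / 2 ^ n := by gcongr; exact (abs_sub _ _).trans (add_le_add (hz n) hG)
      _ = (M + 2) * (1 / 2) ^ n := by rw [one_div_pow, mul_one_div]
  have hlim : Tendsto (fun n : ℕ => (M + 2) * (1 / 2 : ℝ) ^ n) atTop (𝓝 0) := by
    simpa using (tendsto_pow_atTop_nhds_zero_of_lt_one (by norm_num : (0 : ℝ) ≤ 1 / 2)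
      (by norm_num)).const_mul (M + 2)
  exact tendsto_iff_norm_sub_tendsto_zero.2 (squeeze_zero (fun _ => norm_nonneg _) hbound hlim)

lemma exists_ifsMap_chain {K : Set ℕ} {Δ : Set ℝ} (h : Δ ⊆ ⋃ k ∈ K, ifsMap k '' Δ) {y : ℝ}
    (hy : y ∈ Δ) :
    ∃ (a : ℕ → ℕ) (z : ℕ → ℝ), (∀ i, a i ∈ K) ∧ (∀ n, z n ∈ Δ) ∧ z 0 = y ∧
      ∀ n, z n = ifsMap (a n) (z (n + 1)) := by
  have hstep : ∀ w : Δ, ∃ p : ℕ × Δ, p.1 ∈ K ∧ (w : ℝ) = ifsMap p.1 p.2 := by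
    rintro ⟨w, hw⟩
    obtain ⟨k, hk, v, hv, rfl⟩ : ∃ k ∈ K, ∃ v ∈ Δ, ifsMap k v = w := by simpa using h hw
    exact ⟨(k, ⟨v, hv⟩), hk, rfl⟩
  choose F hFK hF using hstep
  let z : ℕ → Δ := fun n => (fun w => (F w).2)^[n] ⟨y, hy⟩
  refine ⟨fun n => (F (z n)).1, fun n => z n, fun n => hFK _, fun n => (z n).2, rfl, fun n => ?_⟩
  change (z n : ℝ) = ifsMap (F (z n)).1 (z (n + 1))
  rw [hF (z n)]
  simp only [z, Function.iterate_succ_apply']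

theorem image_Gval_eq_attractor {K : Set ℕ} (hK : ∀ k ∈ K, 1 ≤ k) {Δ : Set ℝ} (hne : Δ.Nonempty)
    (hc : IsCompact Δ) (hinv : Δ = ⋃ k ∈ K, ifsMap k '' Δ) :
    Gval '' {a | ∀ i, a i ∈ K} = Δ := by
  have hmaps : ∀ k ∈ K, Set.MapsTo (ifsMap k) Δ Δ := fun k hk y hy =>
    hinv.ge (Set.mem_biUnion hk (Set.mem_image_of_mem _ hy))
  ext y
  constructor
  · rintro ⟨a, ha, rfl⟩
    obtain ⟨y₀, hy₀⟩ := hne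
    exact hc.isClosed.mem_of_tendsto
      (tendsto_ifsComp_Gval (fun i => hK _ (ha i)) (z := fun _ => y₀) fun _ => le_rfl)
      (Eventually.of_forall fun n => ifsComp_mem hmaps ha n hy₀)
  · intro hy
    obtain ⟨a, z, ha, hzΔ, rfl, hchain⟩ := exists_ifsMap_chain hinv.le hy
    obtain ⟨M, hM⟩ := hc.isBounded.exists_norm_le
    have hlim := tendsto_ifsComp_Gval (fun i => hK _ (ha i)) fun n => hM _ (hzΔ n)
    simp only [ifsComp_eq_of_chain hchain] at hlim
    exact ⟨a, ha, tendsto_nhds_unique hlim tendsto_const_nhds⟩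

lemma finCF_succ (n : ℕ) (a : ℕ → ℕ) : finCF (n + 1) a = 1 / (a 0 + finCF n (shift a)) := rfl

lemma finCF_nonneg (n : ℕ) (a : ℕ → ℕ) : 0 ≤ finCF n a := by
  induction n generalizing a with
  | zero => exact le_rfl
  | succ n ih => rw [finCF_succ]; have := ih (shift a); positivity

lemma finCF_le_one {a : ℕ → ℕ} (ha : ∀ i, 1 ≤ a i) (n : ℕ) : finCF n a ≤ 1 := by
  cases n with
  | zero => exact zero_le_one
  | succ n =>
    have h₁ : (1 : ℝ) ≤ a 0 := by exact_mod_cast ha 0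
    rw [finCF_succ]
    have h₂ := finCF_nonneg n (shift a)
    exact div_le_one_of_le₀ (by linarith) (by linarith)

lemma one_div_le_finCF_succ {a : ℕ → ℕ} (ha : ∀ i, 1 ≤ a i) (n : ℕ) :
    1 / (a 0 + 1) ≤ finCF (n + 1) a := by
  have h₁ : (1 : ℝ) ≤ a 0 := by exact_mod_cast ha 0
  have h₂ := finCF_nonneg n (shift a)
  have h₃ : finCF n (shift a) ≤ 1 := finCF_le_one (fun i => ha (i + 1)) n
  rw [finCF_succ]
  gcongr

lemma one_div_le_of_tendsto_finCF {a : ℕ → ℕ} (ha : ∀ i, 1 ≤ a i) {x : ℝ}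
    (hx : Tendsto (fun n => finCF n a) atTop (𝓝 x)) : 1 / (a 0 + 1) ≤ x :=
  ge_of_tendsto (hx.comp (tendsto_add_atTop_nat 1))
    (Eventually.of_forall (one_div_le_finCF_succ ha))

lemma tendsto_finCF_shift {a : ℕ → ℕ} {x : ℝ} (hx : Tendsto (fun n => finCF n a) atTop (𝓝 x))
    (hx₀ : x ≠ 0) : Tendsto (fun n => finCF n (shift a)) atTop (𝓝 (x⁻¹ - a 0)) := by
  have h := ((hx.comp (tendsto_add_atTop_nat 1)).inv₀ hx₀).sub_const (a 0 : ℝ)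
  refine h.congr fun n => ?_
  simp only [Function.comp, finCF_succ, one_div, inv_inv, add_sub_cancel_left]

lemma pos_of_tendsto_finCF {a : ℕ → ℕ} (ha : ∀ i, 1 ≤ a i) {x : ℝ}
    (hx : Tendsto (fun n => finCF n a) atTop (𝓝 x)) : 0 < x :=
  lt_of_lt_of_le (by positivity) (one_div_le_of_tendsto_finCF ha hx)

/-- The ceiling rather than the floor: `x⁻¹ - a 0 = [0; a 1, a 2, …]` lies in `(0, 1]`. -/
lemma ceil_inv_eq_of_tendsto_finCF {a : ℕ → ℕ} (ha : ∀ i, 1 ≤ a i) {x : ℝ}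
    (hx : Tendsto (fun n => finCF n a) atTop (𝓝 x)) : ⌈x⁻¹⌉₊ = a 0 + 1 := by
  have hx₁ := one_div_le_of_tendsto_finCF ha hx
  have htail := one_div_le_of_tendsto_finCF (fun i => ha (i + 1))
    (tendsto_finCF_shift hx (pos_of_tendsto_finCF ha hx).ne')
  rw [Nat.ceil_eq_iff (by omega : a 0 + 1 ≠ 0), Nat.add_sub_cancel, Nat.cast_add_one]
  constructor
  · have : (0 : ℝ) < 1 / (a (0 + 1) + 1) := by positivity
    linarith
  · exact inv_le_of_inv_le₀ (by positivity) (by rwa [← one_div])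

lemma head_eq_of_tendsto_finCF {a b : ℕ → ℕ} (ha : ∀ i, 1 ≤ a i) (hb : ∀ i, 1 ≤ b i) {x : ℝ}
    (hxa : Tendsto (fun n => finCF n a) atTop (𝓝 x))
    (hxb : Tendsto (fun n => finCF n b) atTop (𝓝 x)) : a 0 = b 0 := by
  have := (ceil_inv_eq_of_tendsto_finCF ha hxa).symm.trans (ceil_inv_eq_of_tendsto_finCF hb hxb)
  omega

theorem eq_of_tendsto_finCF {a b : ℕ → ℕ} (ha : ∀ i, 1 ≤ a i) (hb : ∀ i, 1 ≤ b i) {x : ℝ}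
    (hxa : Tendsto (fun n => finCF n a) atTop (𝓝 x))
    (hxb : Tendsto (fun n => finCF n b) atTop (𝓝 x)) : a = b := by
  funext n
  induction n generalizing a b x with
  | zero => exact head_eq_of_tendsto_finCF ha hb hxa hxb
  | succ n ih =>
    have hx₀ := (pos_of_tendsto_finCF ha hxa).ne'
    exact ih (fun i => ha (i + 1)) (fun i => hb (i + 1)) (tendsto_finCF_shift hxa hx₀)
      (head_eq_of_tendsto_finCF ha hb hxa hxb ▸ tendsto_finCF_shift hxb hx₀)

lemma abs_one_div_add_sub_le {c u v : ℝ} (hc : 1 ≤ c) (hu : 0 ≤ u) (hv : 0 ≤ v) :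
    |1 / (c + u) - 1 / (c + v)| ≤ |u - v| / (1 + u) := by
  have hcu : 0 < c + u := by linarith
  have hcv : 0 < c + v := by linarith
  rw [div_sub_div _ _ hcu.ne' hcv.ne', abs_div, abs_of_pos (mul_pos hcu hcv), one_mul, mul_one,
    add_sub_add_left_eq_sub, abs_sub_comm]
  gcongr
  nlinarith

lemma abs_finCF_succ_sub_le {N : ℕ} {a : ℕ → ℕ} (ha : ∀ i, a i ∈ Finset.Icc 1 N) (n : ℕ) :
    |finCF (n + 1) a - finCF n a| ≤ ((N + 1) / (N + 2) : ℝ) ^ n := by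
  have hpos : ∀ {b : ℕ → ℕ}, (∀ i, b i ∈ Finset.Icc 1 N) → ∀ i, 1 ≤ b i :=
    fun hb i => (Finset.mem_Icc.1 (hb i)).1
  induction n generalizing a with
  | zero =>
    rw [pow_zero, zero_add, finCF, sub_zero, abs_of_nonneg (finCF_nonneg 1 a)]
    exact finCF_le_one (hpos ha) 1
  | succ n ih =>
    have ha' : ∀ i, shift a i ∈ Finset.Icc 1 N := fun i => ha (i + 1)
    have hu := one_div_le_finCF_succ (hpos ha') n
    have hN : (shift a 0 : ℝ) ≤ N := by exact_mod_cast (Finset.mem_Icc.1 (ha' 0)).2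
    have hu' : 1 / ((N : ℝ) + 1) ≤ finCF (n + 1) (shift a) :=
      le_trans (by gcongr) hu
    calc |finCF (n + 1 + 1) a - finCF (n + 1) a|
        ≤ |finCF (n + 1) (shift a) - finCF n (shift a)| / (1 + finCF (n + 1) (shift a)) := by
          rw [finCF_succ (n + 1) a, finCF_succ n a]
          exact abs_one_div_add_sub_le (by exact_mod_cast hpos ha 0) (finCF_nonneg _ _)
            (finCF_nonneg _ _)
      _ ≤ ((N + 1) / (N + 2) : ℝ) ^ n / (1 + 1 / (N + 1)) := by
          gcongr
          exact ih ha'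
      _ = ((N + 1) / (N + 2) : ℝ) ^ (n + 1) := by
          rw [pow_succ, ← div_inv_eq_mul, inv_div]
          congr 1
          field_simp
          ring

lemma exists_tendsto_finCF {N : ℕ} {a : ℕ → ℕ} (ha : ∀ i, a i ∈ Finset.Icc 1 N) :
    ∃ x, Tendsto (fun n => finCF n a) atTop (𝓝 x) :=
  cauchySeq_tendsto_of_complete <| cauchySeq_of_le_geometric ((N + 1) / (N + 2) : ℝ) 1
    (by rw [div_lt_one (by positivity)]; linarith)
    fun n => by rw [Real.dist_eq, abs_sub_comm, one_mul]; exact abs_finCF_succ_sub_le ha n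

lemma G_eq_Gval {a : ℕ → ℕ} (ha : ∀ i, a i ∈ Finset.Icc 1 9) {x : ℝ}
    (hx : Tendsto (fun n => finCF n a) atTop (𝓝 x)) : G x = Gval a := by
  have hex : ∃ b : ℕ → ℕ, (∀ i, b i ∈ Finset.Icc 1 9) ∧ Tendsto (fun n => finCF n b) atTop (𝓝 x) :=
    ⟨a, ha, hx⟩
  have hpos : ∀ {b : ℕ → ℕ}, (∀ i, b i ∈ Finset.Icc 1 9) → ∀ i, 1 ≤ b i :=
    fun hb i => (Finset.mem_Icc.1 (hb i)).1
  rw [G, dif_pos hex, eq_of_tendsto_finCF (hpos hex.choose_spec.1) (hpos ha) hex.choose_spec.2 hx]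

theorem minkowski_bijOn_attractor (Δ : Set ℝ) (hne : Δ.Nonempty) (hc : IsCompact Δ)
    (hinv : Δ = ⋃ k ∈ Finset.Icc 1 9, (fun y : ℝ => 2 / 2 ^ k - y / 2 ^ k) '' Δ) :
    Set.BijOn G E9 Δ := by
  have hdigit : ∀ k ∈ Finset.Icc 1 9, 1 ≤ k := fun k hk => (Finset.mem_Icc.1 hk).1
  have himage : Gval '' {a | ∀ i, a i ∈ Finset.Icc 1 9} = Δ :=
    image_Gval_eq_attractor (K := ↑(Finset.Icc 1 9)) hdigit hne hc hinv
  refine ⟨?_, ?_, ?_⟩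
  · rintro x ⟨a, ha, hx⟩
    rw [G_eq_Gval ha hx, ← himage]
    exact ⟨a, ha, rfl⟩
  · rintro x ⟨a, ha, hx⟩ y ⟨b, hb, hy⟩ hxy
    rw [G_eq_Gval ha hx, G_eq_Gval hb hy] at hxy
    obtain rfl := Gval_injOn (fun i => hdigit _ (ha i)) (fun i => hdigit _ (hb i)) hxy
    exact tendsto_nhds_unique hx hy
  · rintro y hy
    rw [← himage] at hy
    obtain ⟨a, ha, rfl⟩ := hy
    obtain ⟨x, hx⟩ := exists_tendsto_finCF ha
    exact ⟨x, ⟨a, ha, hx⟩, G_eq_Gval ha hx⟩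
end
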